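/- Define T_1(z) = z + Σ_{n≥1} n^n z^{n+1}/(n+1)!. Then T_1(z)/(1 − T_1(z)) = T'(z) − 1 as formal power series, where T(z) = Σ_{n≥1} n^{n-2} z^n/n!. -/

import Mathlib

open PowerSeries

/-- The EGF of labelled trees, `T(z) = Σ_{n≥1} n^{n-2} z^n/n!`. -/
noncomputable def Ttree : PowerSeries ℝ :=
  PowerSeries.mk fun n => if n = 0 then 0 else (n : ℝ) ^ (n - 2) / (Nat.factorial n)

/-- `T_1(z) = z + Σ_{n≥1} n^n z^{n+1}/(n+1)!`, i.e. coefficient of `z^m` (m ≥ 1)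
is `(m-1)^{m-1}/m!` (with `0^0 = 1`). -/
noncomputable def Tone : PowerSeries ℝ :=
  PowerSeries.mk fun n => if n = 0 then 0 else ((n : ℝ) - 1) ^ (n - 1) / (Nat.factorial n)

/-!
Write `A_n(x) = x (x + n)^(n-1)` for the Abel polynomials, with `A_0 = 1`. The coefficients of
`1 - T₁` and of `T'` are `A_n(-1)/n!` and `A_n(1)/n!`. Abel's identity
`A_n(x + y) = ∑ C(n,k) A_k(x) A_{n-k}(y)` says that the exponential generating function of
`(A_n(x))_n` turns addition in `x` into multiplication, so `(1 - T₁) T'` has coefficients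
`A_n(0)/n!`, i.e. it is `1`. Hence `(1 - T₁)⁻¹ = T'` and `T₁/(1 - T₁) = T' - 1`.

Abel's identity reduces to `∑ C(n,k) A_k(x) (y + n - k)^(n-k) = (x + y + n)^n`, proved by
induction on `n`: the `y`-derivatives of both sides are `n` times the case `n - 1` at `y + 1`,
and both sides vanish at `y = -x - n`, where the left side is `x` times an `n`-th forward
difference of a polynomial of degree `n - 1`.
-/

open Finset

section Abel

variable {R S : Type*} [CommRing R] [CommRing S]

def abelPoly (x : R) (n : ℕ) : R := if n = 0 then 1 else x * (x + n) ^ (n - 1)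

def abelSum (x y : R) (n : ℕ) : R :=
  ∑ k ∈ range (n + 1), n.choose k * abelPoly x k * (y + (n - k : ℕ)) ^ (n - k)

@[simp]
lemma abelPoly_zero_right (x : R) : abelPoly x 0 = 1 := if_pos rfl

lemma map_abelPoly (f : R →+* S) (x : R) (n : ℕ) : f (abelPoly x n) = abelPoly (f x) n := by
  unfold abelPoly; split_ifs <;> simp

lemma map_abelSum (f : R →+* S) (x y : R) (n : ℕ) :
    f (abelSum x y n) = abelSum (f x) (f y) n := by
  simp [abelSum, map_abelPoly]

lemma abelPoly_mul_add_pow (x : R) {k n : ℕ} (hk : k ≤ n + 1) :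
    abelPoly x k * (x + k) ^ (n + 1 - k) = x * (x + k) ^ n := by
  rcases Nat.eq_zero_or_pos k with rfl | hk0
  · simp [pow_succ']
  · rw [abelPoly, if_neg hk0.ne', mul_assoc, ← pow_add]
    congr 2
    omega

lemma abelPoly_eq_pow_sub (x : R) (n : ℕ) :
    abelPoly x n = (x + n) ^ n - n * (x + n) ^ (n - 1) := by
  rcases Nat.eq_zero_or_pos n with rfl | hn
  · simp
  · rw [abelPoly, if_neg hn.ne', ← Nat.sub_add_cancel hn, pow_succ]
    simp only [Nat.add_sub_cancel]
    push_cast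
    ring

/-- The left side is `abelSum x y (n + 1)` differentiated termwise in `y`. -/
lemma sum_choose_abelPoly_mul_deriv (x y : R) (n : ℕ) :
    ∑ k ∈ range (n + 2),
        (n + 1).choose k * abelPoly x k * ((n + 1 - k : ℕ) * (y + (n + 1 - k : ℕ)) ^ (n - k))
      = (n + 1) * abelSum x (y + 1) n := by
  rw [sum_range_succ, Nat.sub_self, Nat.cast_zero, zero_mul, mul_zero, add_zero, abelSum,
    mul_sum]
  refine sum_congr rfl fun k hk => ?_
  have hkn : k ≤ n := Nat.lt_succ_iff.mp (mem_range.mp hk)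
  have hchoose : ((n + 1).choose k : R) * (n + 1 - k : ℕ) = (n + 1) * n.choose k := by
    have h := congrArg (Nat.cast : ℕ → R) (Nat.choose_mul_succ_eq n k)
    push_cast at h
    rw [← h, mul_comm]
  have hsub : ((n + 1 - k : ℕ) : R) = (n - k : ℕ) + 1 := by
    rw [Nat.sub_add_comm hkn]; push_cast; ring
  rw [hsub] at hchoose ⊢
  linear_combination (abelPoly x k * (y + ((n - k : ℕ) + 1)) ^ (n - k)) * hchoose

lemma abelSum_neg_eq_zero (x : R) (n : ℕ) : abelSum x (-x - (n + 1)) (n + 1) = 0 := by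
  have hΔ : ∑ k ∈ range (n + 2), (-1) ^ (n + 1 - k) * ((n + 1).choose k : R) * (x + k) ^ n = 0 := by
    have h := congrFun (fwdDiff_iter_pow_eq_zero_of_lt (R := R) (Nat.lt_succ_self n)) x
    rw [fwdDiff_iter_eq_sum_shift] at h
    simpa [zsmul_eq_mul, nsmul_eq_mul] using h
  rw [abelSum]
  calc _ = ∑ k ∈ range (n + 2),
        x * ((-1) ^ (n + 1 - k) * ((n + 1).choose k : R) * (x + k) ^ n) := by
        refine sum_congr rfl fun k hk => ?_
        have hk : k ≤ n + 1 := Nat.lt_succ_iff.mp (mem_range.mp hk)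
        have hbase : -x - (n + 1) + ((n + 1 - k : ℕ) : R) = -(x + k) := by
          push_cast [Nat.cast_sub hk]; ring
        rw [hbase, neg_pow]
        linear_combination ((-1) ^ (n + 1 - k) * ((n + 1).choose k : R)) * abelPoly_mul_add_pow x hk
    _ = 0 := by rw [← mul_sum, hΔ, mul_zero]

namespace Polynomial

lemma derivative_abelSum (x : R) (n : ℕ) :
    derivative (abelSum (C x) X (n + 1)) = (n + 1) * abelSum (C x) (X + 1) n := by
  rw [← sum_choose_abelPoly_mul_deriv, abelSum, derivative_sum]
  refine sum_congr rfl fun k _ => ?_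
  rw [← map_abelPoly, derivative_mul, derivative_natCast_mul, derivative_C, derivative_pow]
  simp only [derivative_add, derivative_X, derivative_natCast, add_zero, mul_one, zero_mul,
    mul_zero, zero_add, Nat.sub_sub, Nat.add_sub_add_right, map_natCast]

theorem abelSum_C_X [IsAddTorsionFree R] (x : R) (n : ℕ) :
    abelSum (C x) X n = (C x + X + (n : R[X])) ^ n := by
  induction n with
  | zero => simp [abelSum]
  | succ n ih =>
    let P : R[X] := abelSum (C x) X (n + 1) - (C x + X + (n + 1 : R[X])) ^ (n + 1)
    have hshift : abelSum (C x) (X + 1) n = (C x + (X + 1) + (n : R[X])) ^ n := by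
      simpa [map_abelSum] using congrArg (compRingHom (X + 1)) ih
    have hderiv : derivative P = 0 := by
      simp only [P, derivative_sub, derivative_abelSum, hshift, derivative_pow, derivative_add,
        derivative_C, derivative_X, derivative_natCast, derivative_one, map_natCast,
        add_tsub_cancel_right]
      push_cast
      ring
    have hroot : P.eval (-x - (n + 1)) = 0 := by
      have hsum := map_abelSum (evalRingHom (-x - (n + 1))) (C x) X (n + 1)
      simp only [coe_evalRingHom, eval_C, eval_X] at hsum
      have hbase : x + (-x - (n + 1)) + (n + 1) = 0 := by ring
      simp [P, hsum, abelSum_neg_eq_zero, hbase]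
    have hP : P = 0 := by
      rw [eq_C_of_derivative_eq_zero hderiv, eval_C] at hroot
      rw [eq_C_of_derivative_eq_zero hderiv, hroot, C_0]
    push_cast
    exact sub_eq_zero.mp hP

end Polynomial

theorem abelSum_eq [IsAddTorsionFree R] (x y : R) (n : ℕ) : abelSum x y n = (x + y + n) ^ n := by
  simpa [map_abelSum] using congrArg (Polynomial.evalRingHom y) (Polynomial.abelSum_C_X x n)

theorem abelPoly_add [IsAddTorsionFree R] (x y : R) (n : ℕ) :
    abelPoly (x + y) n = ∑ k ∈ range (n + 1), n.choose k * abelPoly x k * abelPoly y (n - k) := by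
  cases n with
  | zero => simp
  | succ n =>
    have hsplit : ∑ k ∈ range (n + 2), (n + 1).choose k * abelPoly x k * abelPoly y (n + 1 - k)
        = abelSum x y (n + 1) - ∑ k ∈ range (n + 2), (n + 1).choose k * abelPoly x k *
            ((n + 1 - k : ℕ) * (y + (n + 1 - k : ℕ)) ^ (n - k)) := by
      rw [abelSum, ← sum_sub_distrib]
      refine sum_congr rfl fun k _ => ?_
      rw [abelPoly_eq_pow_sub y, Nat.sub_sub, Nat.add_sub_add_right]
      ring
    rw [hsplit, sum_choose_abelPoly_mul_deriv, abelSum_eq, abelSum_eq, abelPoly,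
      if_neg n.succ_ne_zero]
    push_cast
    ring

end Abel

section Egf

variable {K : Type*} [Field K]

noncomputable def egf (a : ℕ → K) : K⟦X⟧ :=
  PowerSeries.mk fun n => a n / n.factorial

theorem egf_mul [CharZero K] (a b : ℕ → K) :
    egf a * egf b = egf fun n => ∑ k ∈ range (n + 1), n.choose k * a k * b (n - k) := by
  ext n
  simp only [egf, coeff_mul, Nat.sum_antidiagonal_eq_sum_range_succ_mk, coeff_mk, sum_div]
  refine sum_congr rfl fun k hk => ?_
  have hn : (n.factorial : K) ≠ 0 := Nat.cast_ne_zero.mpr n.factorial_ne_zero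
  rw [Nat.cast_choose K (Nat.lt_succ_iff.mp (mem_range.mp hk))]
  field_simp

theorem egf_abelPoly_zero : egf (abelPoly (0 : K)) = 1 := by
  ext n
  cases n <;> simp [egf, abelPoly, coeff_one]

theorem egf_abelPoly_mul [CharZero K] (x y : K) :
    egf (abelPoly x) * egf (abelPoly y) = egf (abelPoly (x + y)) :=
  (egf_mul _ _).trans (congrArg egf (funext fun n => (abelPoly_add x y n).symm))

end Egf

theorem one_sub_Tone_eq_egf : 1 - Tone = egf (abelPoly (-1)) := by
  ext n
  cases n with
  | zero => simp [Tone, egf]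
  | succ n =>
    rw [map_sub, coeff_one, if_neg n.succ_ne_zero, Tone, egf, coeff_mk, coeff_mk,
      if_neg n.succ_ne_zero, abelPoly, if_neg n.succ_ne_zero, Nat.add_sub_cancel]
    push_cast
    ring

theorem derivative_Ttree_eq_egf : derivative ℝ Ttree = egf (abelPoly 1) := by
  ext n
  rw [coeff_derivative, Ttree, egf, coeff_mk, coeff_mk, if_neg n.succ_ne_zero, Nat.factorial_succ]
  cases n with
  | zero => simp
  | succ n =>
    rw [abelPoly, if_neg n.succ_ne_zero, Nat.add_sub_cancel, show n + 1 + 1 - 2 = n by omega]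
    push_cast
    field_simp
    ring

/-- `T_1(z)/(1 − T_1(z)) = T'(z) − 1` as formal power series. -/
theorem stmt_8 : Tone * (1 - Tone)⁻¹ = PowerSeries.derivativeFun Ttree - 1 := by
  have hmul : (1 - Tone) * derivative ℝ Ttree = 1 := by
    rw [one_sub_Tone_eq_egf, derivative_Ttree_eq_egf, egf_abelPoly_mul, neg_add_cancel,
      egf_abelPoly_zero]
  have hinv : (1 - Tone)⁻¹ = derivative ℝ Ttree :=
    (inv_eq_iff_mul_eq_one (by simp [Tone])).mpr (by rw [mul_comm, hmul])
  show Tone * (1 - Tone)⁻¹ = derivative ℝ Ttree - 1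
  rw [hinv]
  linear_combination -hmul
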